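/- For all real a ≠ 0 and b, the function F(r) = (√π/(2|a|))·[exp(2|a||b|)·Φ(√(2a²)·r + √(2b²)/r) + exp(−2|a||b|)·Φ(√(2a²)·r − √(2b²)/r)] is an antiderivative on (0,∞) of r ↦ exp(−a²r² − b²/r²), where Φ is the standard normal CDF. -/

import Mathlib

/-!
With `c = √2 |a|` and `d = √2 |b|`, completing the square gives
`e^{± c d} · exp (-(c r ± d / r)² / 2) = exp (-a² r² - b² / r²)`, so after the chain rule both
terms carry the same Gaussian factor; their inner derivatives `c ∓ d / r²` add up to `2 c`, and
`√π / (2 |a|)` cancels `2 c / √(2π)`.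
-/

open MeasureTheory Real

noncomputable def Phi (x : ℝ) : ℝ :=
  ∫ u in Set.Iic x, Real.exp (-u ^ 2 / 2) / Real.sqrt (2 * Real.pi)

theorem hasDerivAt_integral_Iic {E : Type*} [NormedAddCommGroup E] [NormedSpace ℝ E]
    [CompleteSpace E] {f : ℝ → E} (hf : Integrable f) {x : ℝ} (hfx : ContinuousAt f x) :
    HasDerivAt (fun y => ∫ u in Set.Iic y, f u) (f x) x := by
  have hsplit : ∀ y, ∫ u in Set.Iic y, f u = (∫ u in Set.Iic 0, f u) + ∫ u in (0 : ℝ)..y, f u := by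
    intro y
    rw [← intervalIntegral.integral_Iic_sub_Iic hf.integrableOn hf.integrableOn, add_sub_cancel]
  rw [funext hsplit]
  exact (intervalIntegral.integral_hasDerivAt_right hf.intervalIntegrable
    hf.aestronglyMeasurable.stronglyMeasurableAtFilter hfx).const_add _

theorem hasDerivAt_Phi (x : ℝ) :
    HasDerivAt Phi (exp (-x ^ 2 / 2) / √(2 * π)) x := by
  have hint : Integrable fun u : ℝ => exp (-u ^ 2 / 2) / √(2 * π) := by
    simpa only [neg_div, one_div, neg_mul, inv_mul_eq_div] using
      (integrable_exp_neg_mul_sq (by norm_num : (0 : ℝ) < 1 / 2)).div_const √(2 * π)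
  exact hasDerivAt_integral_Iic hint (by fun_prop)

theorem hasDerivAt_Phi_mul_add_div (c d : ℝ) {r : ℝ} (hr : r ≠ 0) :
    HasDerivAt (fun r => Phi (c * r + d / r))
      (exp (-(c * r + d / r) ^ 2 / 2) / √(2 * π) * (c - d / r ^ 2)) r := by
  have hinner : HasDerivAt (fun r => c * r + d / r) (c - d / r ^ 2) r := by
    simp only [div_eq_mul_inv]
    exact (((hasDerivAt_id r).const_mul c).add ((hasDerivAt_inv hr).const_mul d)).congr_deriv
      (by ring)
  exact (hasDerivAt_Phi _).comp r hinner

theorem exp_mul_mul_exp_neg_sq_div_two (c d : ℝ) {r : ℝ} (hr : r ≠ 0) :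
    exp (c * d) * exp (-(c * r + d / r) ^ 2 / 2) = exp (-(c ^ 2 * r ^ 2 + d ^ 2 / r ^ 2) / 2) := by
  rw [← exp_add]
  congr 1
  field_simp
  ring

theorem hasDerivAt_exp_mul_Phi_add_exp_neg_mul_Phi (c d : ℝ) {r : ℝ} (hr : r ≠ 0) :
    HasDerivAt (fun r => exp (c * d) * Phi (c * r + d / r) + exp (-(c * d)) * Phi (c * r - d / r))
      (2 * c * exp (-(c ^ 2 * r ^ 2 + d ^ 2 / r ^ 2) / 2) / √(2 * π)) r := by
  have hplus := (hasDerivAt_Phi_mul_add_div c d hr).const_mul (exp (c * d))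
  have hminus := (hasDerivAt_Phi_mul_add_div c (-d) hr).const_mul (exp (c * -d))
  have hexp := exp_mul_mul_exp_neg_sq_div_two c d hr
  have hexp' := exp_mul_mul_exp_neg_sq_div_two c (-d) hr
  simp only [neg_div, ← sub_eq_add_neg, mul_neg, sub_neg_eq_add, neg_sq] at hminus hexp'
  refine (hplus.add hminus).congr_deriv ?_
  rw [← mul_assoc, ← mul_div_assoc, hexp, ← mul_assoc, ← mul_div_assoc, hexp', ← neg_div]
  ring

theorem stmt_1 (a b : ℝ) (ha : a ≠ 0) (r : ℝ) (hr : 0 < r) :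
    HasDerivAt (fun r : ℝ =>
        Real.sqrt Real.pi / (2 * |a|) *
          (Real.exp (2 * |a| * |b|) * Phi (Real.sqrt (2 * a ^ 2) * r + Real.sqrt (2 * b ^ 2) / r)
            + Real.exp (-(2 * |a| * |b|)) *
              Phi (Real.sqrt (2 * a ^ 2) * r - Real.sqrt (2 * b ^ 2) / r)))
      (Real.exp (-(a ^ 2) * r ^ 2 - b ^ 2 / r ^ 2)) r := by
  have hsqrt_two_mul_sq (x : ℝ) : √(2 * x ^ 2) = √2 * |x| := by
    rw [sqrt_mul zero_le_two, sqrt_sq_eq_abs]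
  have hcd : √(2 * a ^ 2) * √(2 * b ^ 2) = 2 * |a| * |b| := by
    rw [hsqrt_two_mul_sq, hsqrt_two_mul_sq, mul_mul_mul_comm, mul_self_sqrt zero_le_two, mul_assoc]
  have h := (hasDerivAt_exp_mul_Phi_add_exp_neg_mul_Phi √(2 * a ^ 2) √(2 * b ^ 2) hr.ne').const_mul
    (√π / (2 * |a|))
  rw [hcd] at h
  refine h.congr_deriv ?_
  have hexponent : -(2 * a ^ 2 * r ^ 2 + 2 * b ^ 2 / r ^ 2) / 2 = -a ^ 2 * r ^ 2 - b ^ 2 / r ^ 2 := by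
    ring
  have ha' : |a| ≠ 0 := abs_ne_zero.mpr ha
  rw [sq_sqrt (by positivity), sq_sqrt (by positivity), hexponent, hsqrt_two_mul_sq,
    sqrt_mul zero_le_two]
  field_simp
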